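/- Let a be a real number with −15 ≤ a < −3 and let A(z) = a/(1−z²)² for z in the open unit disc 𝔻. Then every non-trivial solution of f'' + A f = 0 has at most two zeros in 𝔻, and there exists a non-trivial solution having exactly two distinct zeros in 𝔻. -/

import Mathlib

/-!
Put `s = √(1 - a) ∈ (2, 4]`. The functions `f₁ = (1 - z) ^ ((1 + s) / 2) * (1 + z) ^ ((1 - s) / 2)`
and `f₂ = (1 - z) ^ ((1 - s) / 2) * (1 + z) ^ ((1 + s) / 2)` solve `f'' + A f = 0` with Wronskian
`2 s`, so every solution is `α f₁ + β f₂`. Since `f₁ = f₂ · exp (s ψ)` with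
`ψ = log ((1 - z) / (1 + z))`, the zeros of `α f₁ + β f₂` are the points where `exp (s ψ) = -β / α`.
The Cayley map sends `𝔻` bijectively onto the right half-plane, so `ψ` is injective on `𝔻` with
`|Im ψ| < π / 2`; hence `s ψ` lies in the strip `|Im| < 2π`, where `exp` takes each value at most
twice. For `f₁ + f₂` both values `s ψ = ± π i` are attained.
-/

open Complex Metric Filter Topology

theorem re_pos_of_mem_ball {z : ℂ} (hz : z ∈ ball (0 : ℂ) 1) : 0 < (1 - z).re ∧ 0 < (1 + z).re := by
  have h := (abs_re_le_norm z).trans_lt (mem_ball_zero_iff.mp hz)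
  rw [abs_lt] at h
  simp only [sub_re, add_re, one_re]
  constructor <;> linarith

theorem one_sub_ne_zero_and_one_add_ne_zero {z : ℂ} (hz : z ∈ ball (0 : ℂ) 1) :
    1 - z ≠ 0 ∧ 1 + z ≠ 0 :=
  ⟨ne_of_apply_ne re (re_pos_of_mem_ball hz).1.ne', ne_of_apply_ne re (re_pos_of_mem_ball hz).2.ne'⟩

noncomputable def wronskian (f g : ℂ → ℂ) (z : ℂ) : ℂ := f z * deriv g z - deriv f z * g z

theorem mul_wronskian_eq (f f₁ f₂ : ℂ → ℂ) (z : ℂ) :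
    f z * wronskian f₁ f₂ z = wronskian f f₂ z * f₁ z - wronskian f f₁ z * f₂ z := by
  simp only [wronskian]; ring

def IsSolutionOn (A : ℂ → ℂ) (U : Set ℂ) (f : ℂ → ℂ) : Prop :=
  ∀ z ∈ U, deriv (deriv f) z + A z * f z = 0

namespace IsSolutionOn

variable {U : Set ℂ} {A f g : ℂ → ℂ}

theorem hasDerivAt_wronskian (hfA : IsSolutionOn A U f) (hgA : IsSolutionOn A U g)
    (hf : AnalyticOnNhd ℂ f U) (hg : AnalyticOnNhd ℂ g U) {z : ℂ} (hz : z ∈ U) :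
    HasDerivAt (wronskian f g) 0 z := by
  have hf' := (hf z hz).differentiableAt.hasDerivAt
  have hg' := (hg z hz).differentiableAt.hasDerivAt
  have hf'' := (hf.deriv z hz).differentiableAt.hasDerivAt
  have hg'' := (hg.deriv z hz).differentiableAt.hasDerivAt
  refine ((hf'.mul hg'').sub (hf''.mul hg')).congr_deriv ?_
  linear_combination f z * hgA z hz - g z * hfA z hz

theorem wronskian_eq (hfA : IsSolutionOn A U f) (hgA : IsSolutionOn A U g)
    (hU : IsOpen U) (hU' : IsPreconnected U) (hf : AnalyticOnNhd ℂ f U)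
    (hg : AnalyticOnNhd ℂ g U) {z w : ℂ} (hz : z ∈ U) (hw : w ∈ U) :
    wronskian f g z = wronskian f g w :=
  hU.is_const_of_deriv_eq_zero hU'
    (fun _ hx ↦ (hfA.hasDerivAt_wronskian hgA hf hg hx).differentiableAt.differentiableWithinAt)
    (fun _ hx ↦ (hfA.hasDerivAt_wronskian hgA hf hg hx).deriv) hz hw

theorem exists_eq_linear_combination {f₁ f₂ : ℂ → ℂ} (hfA : IsSolutionOn A U f)
    (hf₁A : IsSolutionOn A U f₁) (hf₂A : IsSolutionOn A U f₂) (hU : IsOpen U)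
    (hU' : IsPreconnected U) (hf : AnalyticOnNhd ℂ f U) (hf₁ : AnalyticOnNhd ℂ f₁ U)
    (hf₂ : AnalyticOnNhd ℂ f₂ U) {z₀ : ℂ} (hz₀ : z₀ ∈ U) (hW : wronskian f₁ f₂ z₀ ≠ 0) :
    ∃ α β : ℂ, ∀ z ∈ U, f z = α * f₁ z + β * f₂ z := by
  refine ⟨wronskian f f₂ z₀ / wronskian f₁ f₂ z₀, -wronskian f f₁ z₀ / wronskian f₁ f₂ z₀,
    fun z hz ↦ ?_⟩
  have hW₁₂ := hf₁A.wronskian_eq hf₂A hU hU' hf₁ hf₂ hz hz₀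
  rw [← hfA.wronskian_eq hf₁A hU hU' hf hf₁ hz hz₀, ← hfA.wronskian_eq hf₂A hU hU' hf hf₂ hz hz₀,
    ← hW₁₂]
  rw [← hW₁₂] at hW
  field_simp
  linear_combination mul_wronskian_eq f f₁ f₂ z

theorem add (hfA : IsSolutionOn A U f) (hgA : IsSolutionOn A U g) (hU : IsOpen U)
    (hf : AnalyticOnNhd ℂ f U) (hg : AnalyticOnNhd ℂ g U) : IsSolutionOn A U (f + g) := by
  intro z hz
  have hderiv : deriv (f + g) =ᶠ[𝓝 z] deriv f + deriv g := by
    filter_upwards [hU.mem_nhds hz] with w hw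
    exact deriv_add (hf w hw).differentiableAt (hg w hw).differentiableAt
  rw [hderiv.deriv_eq, deriv_add (hf.deriv z hz).differentiableAt (hg.deriv z hz).differentiableAt]
  simp only [Pi.add_apply]
  linear_combination hfA z hz + hgA z hz

end IsSolutionOn

section PowPair

noncomputable def powPair (c d : ℂ) (z : ℂ) : ℂ := (1 - z) ^ c * (1 + z) ^ d

variable {c d z : ℂ}

theorem hasDerivAt_powPair (hz : z ∈ ball (0 : ℂ) 1) :
    HasDerivAt (powPair c d) (-c * powPair (c - 1) d z + d * powPair c (d - 1) z) z := by
  have h₁ := ((hasDerivAt_id z).const_sub 1).cpow_const (c := c)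
    (mem_slitPlane_iff.2 (.inl (re_pos_of_mem_ball hz).1))
  have h₂ := ((hasDerivAt_id z).const_add 1).cpow_const (c := d)
    (mem_slitPlane_iff.2 (.inl (re_pos_of_mem_ball hz).2))
  refine (h₁.mul h₂).congr_deriv ?_
  simp only [powPair, id]
  ring

theorem analyticOnNhd_powPair : AnalyticOnNhd ℂ (powPair c d) (ball 0 1) :=
  DifferentiableOn.analyticOnNhd
    (fun _ hz ↦ (hasDerivAt_powPair hz).differentiableAt.differentiableWithinAt) isOpen_ball

theorem powPair_ne_zero (hz : z ∈ ball (0 : ℂ) 1) : powPair c d z ≠ 0 := by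
  obtain ⟨h₁, h₂⟩ := one_sub_ne_zero_and_one_add_ne_zero hz
  exact mul_ne_zero (cpow_ne_zero_iff.2 (.inl h₁)) (cpow_ne_zero_iff.2 (.inl h₂))

theorem powPair_sub_one_left (hz : z ∈ ball (0 : ℂ) 1) :
    powPair (c - 1) d z = powPair c d z / (1 - z) := by
  rw [powPair, powPair, cpow_sub _ _ (one_sub_ne_zero_and_one_add_ne_zero hz).1, cpow_one]
  ring

theorem powPair_sub_one_right (hz : z ∈ ball (0 : ℂ) 1) :
    powPair c (d - 1) z = powPair c d z / (1 + z) := by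
  rw [powPair, powPair, cpow_sub _ _ (one_sub_ne_zero_and_one_add_ne_zero hz).2, cpow_one]
  ring

@[simp] theorem powPair_zero : powPair c d 0 = 1 := by simp [powPair]

theorem deriv_powPair_zero : deriv (powPair c d) 0 = d - c := by
  rw [(hasDerivAt_powPair (mem_ball_self one_pos)).deriv]
  simp [powPair]; ring

theorem isSolutionOn_powPair {a : ℂ} (hcd : c + d = 1) (hprod : c * d = a / 4) :
    IsSolutionOn (fun z ↦ a / (1 - z ^ 2) ^ 2) (ball 0 1) (powPair c d) := by
  intro z hz
  have hderiv : deriv (powPair c d) =ᶠ[𝓝 z]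
      fun w ↦ -c * powPair (c - 1) d w + d * powPair c (d - 1) w := by
    filter_upwards [isOpen_ball.mem_nhds hz] with w hw
    exact (hasDerivAt_powPair hw).deriv
  have := ((hasDerivAt_powPair (c := c - 1) (d := d) hz).const_mul (-c)).fun_add
    ((hasDerivAt_powPair (c := c) (d := d - 1) hz).const_mul d)
  rw [hderiv.deriv_eq, this.deriv]
  obtain ⟨h₁, h₂⟩ := one_sub_ne_zero_and_one_add_ne_zero hz
  simp only [powPair_sub_one_left hz, powPair_sub_one_right hz]
  rw [show 1 - z ^ 2 = (1 - z) * (1 + z) by ring]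
  field_simp
  linear_combination powPair c d z * ((c * (1 + z) ^ 2 + d * (1 - z) ^ 2) * hcd - 4 * hprod)

end PowPair

section Cayley

noncomputable def cayley (z : ℂ) : ℂ := (1 - z) / (1 + z)

variable {z w : ℂ}

theorem cayley_cayley (hz : 1 + z ≠ 0) : cayley (cayley z) = z := by
  have h₂ : (2 : ℂ) ≠ 0 := two_ne_zero
  simp only [cayley]
  field_simp
  ring

theorem re_cayley_pos (hz : z ∈ ball (0 : ℂ) 1) : 0 < (cayley z).re := by
  have hnorm : z.re ^ 2 + z.im ^ 2 < 1 := by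
    have := mem_ball_zero_iff.mp hz
    rw [← normSq_add_mul_I z.re z.im, re_add_im, ← Complex.sq_norm]
    nlinarith [norm_nonneg z]
  have hden := normSq_pos.2 (one_sub_ne_zero_and_one_add_ne_zero hz).2
  rw [cayley, div_re, ← add_div]
  apply div_pos _ hden
  simp only [sub_re, add_re, one_re, sub_im, add_im, one_im]
  nlinarith

theorem cayley_mem_ball (hw : 0 < w.re) : cayley w ∈ ball (0 : ℂ) 1 := by
  have hw' : 1 + w ≠ 0 := ne_of_apply_ne re (by simp; linarith)
  rw [mem_ball_zero_iff, cayley, norm_div, div_lt_one (norm_pos_iff.2 hw')]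
  refine lt_of_pow_lt_pow_left₀ 2 (norm_nonneg _) ?_
  rw [Complex.sq_norm, Complex.sq_norm, normSq_apply, normSq_apply]
  simp only [sub_re, add_re, one_re, sub_im, add_im, one_im]
  nlinarith

noncomputable def cayleyLog (z : ℂ) : ℂ := log (1 - z) - log (1 + z)

theorem exp_cayleyLog (hz : z ∈ ball (0 : ℂ) 1) : exp (cayleyLog z) = cayley z := by
  obtain ⟨h₁, h₂⟩ := one_sub_ne_zero_and_one_add_ne_zero hz
  rw [cayleyLog, exp_sub, exp_log h₁, exp_log h₂, cayley]

theorem cayleyLog_eq_log_cayley (hz : z ∈ ball (0 : ℂ) 1) : cayleyLog z = log (cayley z) := by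
  have h₁ := abs_lt.1 (abs_arg_lt_pi_div_two_iff.2 (.inl (re_pos_of_mem_ball hz).1))
  have h₂ := abs_lt.1 (abs_arg_lt_pi_div_two_iff.2 (.inl (re_pos_of_mem_ball hz).2))
  have him : (cayleyLog z).im = arg (1 - z) - arg (1 + z) := by simp [cayleyLog, log_im]
  rw [← exp_cayleyLog hz, log_exp] <;> rw [him] <;> linarith

theorem abs_im_cayleyLog_lt (hz : z ∈ ball (0 : ℂ) 1) : |(cayleyLog z).im| < Real.pi / 2 := by
  rw [cayleyLog_eq_log_cayley hz, log_im]
  exact abs_arg_lt_pi_div_two_iff.2 (.inl (re_cayley_pos hz))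

theorem cayleyLog_injOn : Set.InjOn cayleyLog (ball (0 : ℂ) 1) := by
  intro z hz w hw h
  have := congrArg cayley (congrArg exp h)
  rwa [exp_cayleyLog hz, exp_cayleyLog hw, cayley_cayley (one_sub_ne_zero_and_one_add_ne_zero hz).2,
    cayley_cayley (one_sub_ne_zero_and_one_add_ne_zero hw).2] at this

theorem cayleyLog_cayley (hw : 0 < w.re) : cayleyLog (cayley w) = log w := by
  have hw' : 1 + w ≠ 0 := ne_of_apply_ne re (by simp; linarith)
  rw [cayleyLog_eq_log_cayley (cayley_mem_ball hw), cayley_cayley hw']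

theorem re_exp_mul_I_pos {θ : ℝ} (hθ : |θ| < Real.pi / 2) : 0 < (exp (θ * I)).re := by
  rw [exp_ofReal_mul_I_re]
  exact Real.cos_pos_of_mem_Ioo (abs_lt.1 hθ)

theorem cayleyLog_cayley_exp_mul_I {θ : ℝ} (hθ : |θ| < Real.pi / 2) :
    cayleyLog (cayley (exp (θ * I))) = θ * I := by
  rw [cayleyLog_cayley (re_exp_mul_I_pos hθ), log_exp] <;> simp <;>
    linarith [abs_lt.1 hθ, Real.pi_pos]

end Cayley

theorem eq_or_eq_or_eq_of_exp_eq {u v w : ℂ} (huv : exp u = exp v) (hvw : exp v = exp w)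
    (hu : |u.im| < 2 * Real.pi) (hv : |v.im| < 2 * Real.pi) (hw : |w.im| < 2 * Real.pi) :
    u = v ∨ v = w ∨ u = w := by
  have period_bound : ∀ {x y : ℂ} {n : ℤ}, x = y + n * (2 * Real.pi * I) →
      |x.im| < 2 * Real.pi → |y.im| < 2 * Real.pi → -2 < n ∧ n < 2 := by
    intro x y n hxy hx hy
    have him : x.im = y.im + n * (2 * Real.pi) := by simp [hxy]
    rw [abs_lt] at hx hy
    have : (-2 : ℝ) < n ∧ (n : ℝ) < 2 := by
      constructor <;> nlinarith [Real.pi_pos]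
    exact_mod_cast this
  obtain ⟨m, hm⟩ := exp_eq_exp_iff_exists_int.1 huv
  obtain ⟨n, hn⟩ := exp_eq_exp_iff_exists_int.1 hvw
  have huw : u = w + ((m + n : ℤ) : ℂ) * (2 * Real.pi * I) := by rw [hm, hn]; push_cast; ring
  have := period_bound hm hu hv
  have := period_bound hn hv hw
  have := period_bound huw hu hw
  obtain h | h | h : m = 0 ∨ n = 0 ∨ m + n = 0 := by omega
  · exact .inl (by simpa [h] using hm)
  · exact .inr (.inl (by simpa [h] using hn))
  · exact .inr (.inr (by simpa [h] using huw))

theorem powPair_eq_mul_exp (s : ℂ) {z : ℂ} (hz : z ∈ ball (0 : ℂ) 1) :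
    powPair ((1 + s) / 2) ((1 - s) / 2) z =
      powPair ((1 - s) / 2) ((1 + s) / 2) z * exp (s * cayleyLog z) := by
  obtain ⟨h₁, h₂⟩ := one_sub_ne_zero_and_one_add_ne_zero hz
  simp only [powPair, cpow_def_of_ne_zero h₁, cpow_def_of_ne_zero h₂, cayleyLog, ← exp_add]
  congr 1
  ring

theorem wronskian_powPair_zero (s : ℂ) :
    wronskian (powPair ((1 + s) / 2) ((1 - s) / 2)) (powPair ((1 - s) / 2) ((1 + s) / 2)) 0 =
      2 * s := by
  simp only [wronskian, powPair_zero, deriv_powPair_zero]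
  ring

theorem linear_combination_powPair_eq_zero_iff (s α β : ℂ) {z : ℂ} (hz : z ∈ ball (0 : ℂ) 1) :
    α * powPair ((1 + s) / 2) ((1 - s) / 2) z + β * powPair ((1 - s) / 2) ((1 + s) / 2) z = 0 ↔
      α * exp (s * cayleyLog z) + β = 0 := by
  rw [powPair_eq_mul_exp s hz,
    show ∀ p e : ℂ, α * (p * e) + β * p = p * (α * e + β) by intros; ring,
    mul_eq_zero, or_iff_right (powPair_ne_zero hz)]

theorem eq_or_eq_or_eq_of_exp_mul_cayleyLog_eq {s : ℝ} (hs : 0 < s) (hs4 : s ≤ 4) {z z' z'' : ℂ}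
    (hz : z ∈ ball (0 : ℂ) 1) (hz' : z' ∈ ball (0 : ℂ) 1) (hz'' : z'' ∈ ball (0 : ℂ) 1)
    (h : exp (s * cayleyLog z) = exp (s * cayleyLog z'))
    (h' : exp (s * cayleyLog z') = exp (s * cayleyLog z'')) :
    z = z' ∨ z' = z'' ∨ z = z'' := by
  have hbound : ∀ x ∈ ball (0 : ℂ) 1, |((s : ℂ) * cayleyLog x).im| < 2 * Real.pi := fun x hx ↦ by
    rw [im_ofReal_mul, abs_mul, abs_of_pos hs]
    nlinarith [abs_im_cayleyLog_lt hx, Real.pi_pos]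
  have hinj : Set.InjOn (fun x ↦ (s : ℂ) * cayleyLog x) (ball 0 1) := fun x hx y hy hxy ↦
    cayleyLog_injOn hx hy (mul_left_cancel₀ (ofReal_ne_zero.2 hs.ne') hxy)
  rcases eq_or_eq_or_eq_of_exp_eq h h' (hbound z hz) (hbound z' hz') (hbound z'' hz'') with
    e | e | e
  · exact .inl (hinj hz hz' e)
  · exact .inr (.inl (hinj hz' hz'' e))
  · exact .inr (.inr (hinj hz hz'' e))

theorem card_le_two_of_linear_combination_powPair_eq_zero {s : ℝ} (hs : 0 < s) (hs4 : s ≤ 4)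
    {α β : ℂ} (hαβ : α ≠ 0 ∨ β ≠ 0) {S : Finset ℂ}
    (hS : ∀ z ∈ S, z ∈ ball (0 : ℂ) 1 ∧
      α * powPair ((1 + s) / 2) ((1 - s) / 2) z + β * powPair ((1 - s) / 2) ((1 + s) / 2) z = 0) :
    S.card ≤ 2 := by
  have hexp : ∀ z ∈ S, α * exp (s * cayleyLog z) + β = 0 := fun z hz ↦
    (linear_combination_powPair_eq_zero_iff _ _ _ (hS z hz).1).1 (hS z hz).2
  by_contra! hS₂
  obtain ⟨z, hz, z', hz', z'', hz'', hzz', hzz'', hz'z''⟩ := Finset.two_lt_card.1 hS₂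
  have hα : α ≠ 0 := by
    rintro rfl
    exact hαβ.resolve_left (not_not.2 rfl) (by simpa using hexp z hz)
  have hval : ∀ x ∈ S, exp (s * cayleyLog x) = -β / α := fun x hx ↦ by
    rw [eq_div_iff hα]
    linear_combination hexp x hx
  rcases eq_or_eq_or_eq_of_exp_mul_cayleyLog_eq hs hs4 (hS z hz).1 (hS z' hz').1 (hS z'' hz'').1
    ((hval z hz).trans (hval z' hz').symm) ((hval z' hz').trans (hval z'' hz'').symm) with
    h | h | h <;> contradiction

theorem exists_two_zeros_powPair_add {s : ℝ} (hs : 2 < s) (hs4 : s ≤ 4) :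
    ∃ z₁ ∈ ball (0 : ℂ) 1, ∃ z₂ ∈ ball (0 : ℂ) 1, z₁ ≠ z₂ ∧ ∀ z ∈ ball (0 : ℂ) 1,
      powPair ((1 + s) / 2) ((1 - s) / 2) z + powPair ((1 - s) / 2) ((1 + s) / 2) z = 0 ↔
        z = z₁ ∨ z = z₂ := by
  have hzero : ∀ z ∈ ball (0 : ℂ) 1,
      powPair ((1 + s) / 2) ((1 - s) / 2) z + powPair ((1 - s) / 2) ((1 + s) / 2) z = 0 ↔
        exp (s * cayleyLog z) = -1 := fun z hz ↦ by
    simpa [add_eq_zero_iff_eq_neg] using linear_combination_powPair_eq_zero_iff s 1 1 hz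
  have hθ : |Real.pi / s| < Real.pi / 2 := by
    rw [abs_of_pos (by positivity), div_lt_div_iff₀ (by linarith) two_pos]
    nlinarith [Real.pi_pos]
  have hθ' : |-(Real.pi / s)| < Real.pi / 2 := by rwa [abs_neg]
  set z₁ := cayley (exp ((Real.pi / s : ℝ) * I))
  set z₂ := cayley (exp ((-(Real.pi / s) : ℝ) * I))
  have hz₁ : z₁ ∈ ball (0 : ℂ) 1 := cayley_mem_ball (re_exp_mul_I_pos hθ)
  have hz₂ : z₂ ∈ ball (0 : ℂ) 1 := cayley_mem_ball (re_exp_mul_I_pos hθ')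
  have hs₀ : (s : ℂ) ≠ 0 := ofReal_ne_zero.2 (by linarith)
  have hsψ₁ : (s : ℂ) * cayleyLog z₁ = Real.pi * I := by
    rw [cayleyLog_cayley_exp_mul_I hθ]; push_cast; field_simp
  have hsψ₂ : (s : ℂ) * cayleyLog z₂ = -(Real.pi * I) := by
    rw [cayleyLog_cayley_exp_mul_I hθ']; push_cast; field_simp
  have hexp₁ : exp (s * cayleyLog z₁) = -1 := by rw [hsψ₁, exp_pi_mul_I]
  have hexp₂ : exp (s * cayleyLog z₂) = -1 := by
    rw [hsψ₂, exp_neg, exp_pi_mul_I, inv_neg, inv_one]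
  have hne : z₁ ≠ z₂ := fun h ↦ by
    have := CharZero.eq_neg_self_iff.1 (hsψ₁.symm.trans (h ▸ hsψ₂))
    simp [Real.pi_ne_zero, I_ne_zero] at this
  refine ⟨z₁, hz₁, z₂, hz₂, hne, fun z hz ↦ (hzero z hz).trans ⟨fun hz0 ↦ ?_, ?_⟩⟩
  · rcases eq_or_eq_or_eq_of_exp_mul_cayleyLog_eq (by linarith) hs4 hz hz₁ hz₂
      (hz0.trans hexp₁.symm) (hexp₁.trans hexp₂.symm) with h | h | h
    exacts [.inl h, absurd h hne, .inr h]
  · rintro (rfl | rfl)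
    exacts [hexp₁, hexp₂]

theorem stmt_14 (a : ℝ) (ha₁ : -15 ≤ a) (ha₂ : a < -3)
    (A : ℂ → ℂ) (hA : ∀ z ∈ ball (0:ℂ) 1, A z = (a : ℂ) / (1 - z ^ 2) ^ 2) :
    (∀ f : ℂ → ℂ, AnalyticOnNhd ℂ f (ball (0:ℂ) 1) →
      (∀ z ∈ ball (0:ℂ) 1, deriv (deriv f) z + A z * f z = 0) →
      ¬ (∀ z ∈ ball (0:ℂ) 1, f z = 0) →
      ∀ S : Finset ℂ, (∀ z ∈ S, z ∈ ball (0:ℂ) 1 ∧ f z = 0) → S.card ≤ 2) ∧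
    (∃ f : ℂ → ℂ, AnalyticOnNhd ℂ f (ball (0:ℂ) 1) ∧
      (∀ z ∈ ball (0:ℂ) 1, deriv (deriv f) z + A z * f z = 0) ∧
      ¬ (∀ z ∈ ball (0:ℂ) 1, f z = 0) ∧
      ∃ z₁ ∈ ball (0:ℂ) 1, ∃ z₂ ∈ ball (0:ℂ) 1, z₁ ≠ z₂ ∧ f z₁ = 0 ∧ f z₂ = 0 ∧
        ∀ z ∈ ball (0:ℂ) 1, f z = 0 → z = z₁ ∨ z = z₂) := by
  -- the exponents `(1 ± s) / 2` are the roots of `c (c - 1) = -a / 4`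
  obtain ⟨s, hs₂, hs₄, hsa⟩ :
      ∃ s : ℝ, 2 < s ∧ s ≤ 4 ∧ (1 + s) / 2 * ((1 - s) / 2) = (a : ℂ) / 4 := by
    have hsq := Real.sq_sqrt (by linarith : 0 ≤ 1 - a)
    have hsqrt := Real.sqrt_nonneg (1 - a)
    refine ⟨√(1 - a), by nlinarith, by nlinarith, ?_⟩
    have : ((√(1 - a) : ℝ) : ℂ) ^ 2 = 1 - a := by exact_mod_cast hsq
    linear_combination -this / 4
  have hsol : ∀ c d : ℂ, c + d = 1 → c * d = a / 4 → IsSolutionOn A (ball 0 1) (powPair c d) :=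
    fun c d hcd hprod z hz ↦ hA z hz ▸ isSolutionOn_powPair hcd hprod z hz
  have hsol₁ := hsol _ _ (by ring) hsa
  have hsol₂ := hsol ((1 - s) / 2) ((1 + s) / 2) (by ring) (by rw [mul_comm]; exact hsa)
  have h0 : (0 : ℂ) ∈ ball (0 : ℂ) 1 := mem_ball_self one_pos
  refine ⟨fun f hf hfA hne S hS ↦ ?_, ?_⟩
  · have hW : wronskian _ _ 0 ≠ 0 := (wronskian_powPair_zero s).trans_ne
      (mul_ne_zero two_ne_zero (ofReal_ne_zero.2 (by linarith)))
    obtain ⟨α, β, hrep⟩ := IsSolutionOn.exists_eq_linear_combination hfA hsol₁ hsol₂ isOpen_ball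
      (convex_ball 0 1).isPreconnected hf analyticOnNhd_powPair analyticOnNhd_powPair h0 hW
    refine card_le_two_of_linear_combination_powPair_eq_zero (by linarith) hs₄ ?_
      fun z hz ↦ ⟨(hS z hz).1, hrep z (hS z hz).1 ▸ (hS z hz).2⟩
    by_contra! hαβ
    exact hne fun z hz ↦ by simp [hrep z hz, hαβ]
  · obtain ⟨z₁, hz₁, z₂, hz₂, hne, hzeros⟩ := exists_two_zeros_powPair_add hs₂ hs₄
    refine ⟨_, analyticOnNhd_powPair.add analyticOnNhd_powPair,
      hsol₁.add hsol₂ isOpen_ball analyticOnNhd_powPair analyticOnNhd_powPair,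
      fun h ↦ by simpa using h 0 h0, z₁, hz₁, z₂, hz₂, hne, (hzeros z₁ hz₁).2 (.inl rfl),
      (hzeros z₂ hz₂).2 (.inr rfl), fun z hz h ↦ (hzeros z hz).1 h⟩
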